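/- Let μ be a probability measure on ℝ with finite first moment and cdf F, not equal to a Dirac mass. Then for every N ≥ 1, N·e_N(μ,1) + (N+1)·e_{N+1}(μ,1) ≥ (1/2) ∫_ℝ min(F(x), 1−F(x)) dx, where the right-hand side is positive. Consequently limsup_{N→∞} N·e_N(μ,1) > 0. -/

import Mathlib

open MeasureTheory ProbabilityTheory Filter Set
open scoped Topology ENNReal

/-!
Transporting `μ` onto points `x₀, …, x_{N-1}` along the quantile coupling costs an area, so by
Tonelli it is an integral over levels `y`. At a level with `F y ∈ [k/N, (k+1)/N]` the quantile
function crosses `y` inside the `k`-th cell, whence that cell alone contributes at least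
`N⁻¹ · dist(N F y, ℕ)`; thus `∫ dist(N F y, ℕ) dy ≤ N e_N` for every `N`. Since `N v` and
`(N+1) v` differ by `v`, their distances to `ℕ` add up to at least `min v (1 - v)`, and adding the
two bounds gives `∫ min(F, 1 - F) ≤ N e_N + (N+1) e_{N+1}`. The left side is finite by the moment
assumption, and positive because a non-Dirac `F` takes a value in `(0, 1)`, hence by right
continuity stays in `(0, 1)` on an interval.
-/

/-- Distance from `x` to the nearest nonnegative integer. -/
noncomputable def nnd (x : ℝ) : ℝ := ⨅ j : ℕ, |x - (j : ℝ)|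

/-- Left-continuous quantile function of `μ`. -/
noncomputable def qf (μ : Measure ℝ) (u : ℝ) : ℝ := sInf {x : ℝ | u ≤ cdf μ x}

/-- Minimal Wasserstein-`ρ` distance between `μ` and empirical measures on `N` points,
expressed through the quantile formula for the Wasserstein distance on `ℝ`. -/
noncomputable def eN (μ : Measure ℝ) (ρ : ℝ) (N : ℕ) : ℝ :=
  sInf ((fun x : Fin N → ℝ =>
      (∑ i : Fin N,
        ∫ u in Set.Ioc ((i : ℝ) / N) (((i : ℝ) + 1) / N), |x i - qf μ u| ^ ρ) ^ (1 / ρ)) ''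
    {x : Fin N → ℝ | Monotone x})

section Quantile

variable (μ : Measure ℝ) {u y : ℝ}

lemma bddBelow_setOf_le_cdf (hu : 0 < u) : BddBelow {x | u ≤ cdf μ x} := by
  obtain ⟨x₀, hx₀⟩ := eventually_atBot.1 ((tendsto_cdf_atBot μ).eventually_lt_const hu)
  refine ⟨x₀, fun x hx => ?_⟩
  by_contra! hlt
  exact (hx₀ x hlt.le).not_ge hx

lemma nonempty_setOf_le_cdf (hu : u < 1) : {x | u ≤ cdf μ x}.Nonempty :=
  (((tendsto_cdf_atTop μ).eventually_const_lt hu).exists).imp fun _ => le_of_lt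

lemma qf_le_of_le_cdf (hu : 0 < u) (h : u ≤ cdf μ y) : qf μ u ≤ y :=
  csInf_le (bddBelow_setOf_le_cdf μ hu) h

lemma le_cdf_qf (hu : u < 1) : u ≤ cdf μ (qf μ u) := by
  have hright : ∀ᶠ x in 𝓝[>] (qf μ u), u ≤ cdf μ x := by
    filter_upwards [self_mem_nhdsWithin] with x (hx : qf μ u < x)
    obtain ⟨s, hs, hsx⟩ := exists_lt_of_csInf_lt (nonempty_setOf_le_cdf μ hu) hx
    exact hs.trans (monotone_cdf μ hsx.le)
  exact ge_of_tendsto ((cdf μ).right_continuous _ |>.tendsto.mono_left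
    (nhdsWithin_mono _ Ioi_subset_Ici_self)) hright

lemma qf_le_iff_le_cdf (hu₀ : 0 < u) (hu₁ : u < 1) : qf μ u ≤ y ↔ u ≤ cdf μ y :=
  ⟨fun h => (le_cdf_qf μ hu₁).trans (monotone_cdf μ h), qf_le_of_le_cdf μ hu₀⟩

lemma monotoneOn_qf : MonotoneOn (qf μ) (Ioo 0 1) := fun _ hu _ hv huv =>
  qf_le_of_le_cdf μ hu.1 (huv.trans (le_cdf_qf μ hv.2))

lemma qf_of_nonpos (hu : u ≤ 0) : qf μ u = 0 := by
  refine Real.sInf_of_not_bddBelow fun ⟨c, hc⟩ => ?_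
  have : c - 1 ∈ {x | u ≤ cdf μ x} := hu.trans (cdf_nonneg μ _)
  linarith [hc this]

lemma qf_of_one_lt (hu : 1 < u) : qf μ u = 0 := by
  have hempty : {x | u ≤ cdf μ x} = ∅ :=
    eq_empty_of_forall_notMem fun x hx => (hu.trans_le hx).not_ge (cdf_le_one μ x)
  rw [qf, hempty, Real.sInf_empty]

lemma measurable_qf : Measurable (qf μ) := by
  refine measurable_of_restrict_of_restrict_compl (s := Ioo 0 1) measurableSet_Ioo ?_ ?_
  · exact Monotone.measurable fun (a b : Ioo (0 : ℝ) 1) (hab : a ≤ b) =>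
      monotoneOn_qf μ a.2 b.2 hab
  · have hjunk : (Ioo (0 : ℝ) 1)ᶜ.domRestrict (qf μ) =
        fun u : ((Ioo (0 : ℝ) 1)ᶜ : Set ℝ) => ({1} : Set ℝ).indicator (fun _ => qf μ 1) u := by
      ext ⟨u, hu⟩
      rcases eq_or_ne u 1 with rfl | h1
      · simp
      rw [domRestrict_apply, indicator_of_notMem (mem_singleton_iff.not.2 h1)]
      rcases not_and_or.1 hu with hu | hu
      · exact qf_of_nonpos μ (not_lt.1 hu)
      · exact qf_of_one_lt μ (lt_of_le_of_ne (not_lt.1 hu) h1.symm)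
    rw [hjunk]
    exact (measurable_const.indicator (measurableSet_singleton 1)).comp measurable_subtype_coe

variable [IsProbabilityMeasure μ]

lemma map_qf_volume_Ioo : (volume.restrict (Ioo (0 : ℝ) 1)).map (qf μ) = μ := by
  refine Measure.ext_of_Iic _ _ fun y => ?_
  have hpre : qf μ ⁻¹' Iic y ∩ Ioo 0 1 = Ioc 0 (cdf μ y) \ {1} := by
    ext u
    simp only [mem_inter_iff, mem_preimage, mem_Iic, mem_Ioo, Set.mem_sdiff, mem_Ioc,
      mem_singleton_iff]
    constructor
    · rintro ⟨h, hu₀, hu₁⟩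
      exact ⟨⟨hu₀, (qf_le_iff_le_cdf μ hu₀ hu₁).1 h⟩, hu₁.ne⟩
    · rintro ⟨⟨hu₀, hu⟩, hu₁⟩
      have hu₁' : u < 1 := lt_of_le_of_ne (hu.trans (cdf_le_one μ y)) hu₁
      exact ⟨(qf_le_iff_le_cdf μ hu₀ hu₁').2 hu, hu₀, hu₁'⟩
  rw [Measure.map_apply (measurable_qf μ) measurableSet_Iic,
    Measure.restrict_apply (measurable_qf μ measurableSet_Iic), hpre,
    measure_sdiff_null (Real.volume_singleton), Real.volume_Ioc, sub_zero, ofReal_cdf]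

lemma integrableOn_qf (hmom : Integrable (fun x : ℝ => |x|) μ) :
    IntegrableOn (qf μ) (Ioc 0 1) := by
  have hid : Integrable id ((volume.restrict (Ioo (0 : ℝ) 1)).map (qf μ)) := by
    rw [map_qf_volume_Ioo]
    exact hmom.mono' aestronglyMeasurable_id (.of_forall fun x => le_of_eq (Real.norm_eq_abs x))
  rw [IntegrableOn, ← Measure.restrict_congr_set Ioo_ae_eq_Ioc]
  exact hid.comp_measurable (measurable_qf μ)

end Quantile

section NearestInteger

lemma nnd_le (x : ℝ) (j : ℕ) : nnd x ≤ |x - j| :=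
  ciInf_le ⟨0, by rintro _ ⟨j, rfl⟩; exact abs_nonneg _⟩ j

lemma nnd_le_min_sub {t : ℝ} {k : ℕ} (hk : k ≤ t) (hk' : t ≤ k + 1) :
    nnd t ≤ min (t - k) (k + 1 - t) := by
  refine le_min ((nnd_le t k).trans_eq (abs_of_nonneg (by linarith))) ?_
  refine (nnd_le t (k + 1)).trans_eq ?_
  rw [abs_of_nonpos (by push_cast; linarith)]
  push_cast
  ring

lemma min_le_abs_sub_intCast (v : ℝ) (m : ℤ) :
    min v (1 - v) ≤ |v - m| := by
  rcases le_or_gt m 0 with hm | hm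
  · have : (m : ℝ) ≤ 0 := by exact_mod_cast hm
    exact (min_le_left _ _).trans (le_abs.2 (Or.inl (by linarith)))
  · have : (1 : ℝ) ≤ m := by exact_mod_cast hm
    exact (min_le_right _ _).trans (le_abs.2 (Or.inr (by linarith)))

lemma min_le_nnd_add_nnd (v : ℝ) (N : ℕ) :
    min v (1 - v) ≤ nnd (N * v) + nnd ((N + 1 : ℕ) * v) := by
  have key : ∀ j k : ℕ, min v (1 - v) ≤ |N * v - j| + |(N + 1 : ℕ) * v - k| := fun j k => by
    calc min v (1 - v) ≤ |v - ((k : ℤ) - j : ℤ)| := min_le_abs_sub_intCast v _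
      _ = |((N + 1 : ℕ) * v - k) - (N * v - j)| := by push_cast; ring_nf
      _ ≤ |(N + 1 : ℕ) * v - k| + |N * v - j| := abs_sub _ _
      _ = |N * v - j| + |(N + 1 : ℕ) * v - k| := add_comm _ _
  have hk : ∀ j : ℕ, min v (1 - v) - |N * v - j| ≤ nnd ((N + 1 : ℕ) * v) := fun j =>
    le_ciInf fun k => by linarith [key j k]
  have hj : min v (1 - v) - nnd ((N + 1 : ℕ) * v) ≤ nnd (N * v) :=
    le_ciInf fun j => by linarith [hk j]
  linarith

lemma measurable_nnd : Measurable nnd :=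
  Measurable.iInf fun _ => (measurable_id.sub measurable_const).abs

lemma exists_fin_div_le_le {N : ℕ} (hN : 0 < N) {v : ℝ} (hv₀ : 0 ≤ v) (hv₁ : v ≤ 1) :
    ∃ k : Fin N, (k : ℝ) / N ≤ v ∧ v ≤ ((k : ℝ) + 1) / N := by
  have hN' : (0 : ℝ) < N := by exact_mod_cast hN
  have hNv : 0 ≤ N * v := mul_nonneg hN'.le hv₀
  simp only [div_le_iff₀ hN', le_div_iff₀ hN', mul_comm v]
  rcases lt_or_ge (N * v) N with hv | hv
  · exact ⟨⟨⌊N * v⌋₊, (Nat.floor_lt hNv).2 hv⟩, Nat.floor_le hNv, (Nat.lt_floor_add_one _).le⟩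
  · obtain ⟨n, rfl⟩ := Nat.exists_eq_add_of_lt hN
    refine ⟨Fin.last _, ?_, ?_⟩ <;> push_cast at hv ⊢ <;> nlinarith

lemma nnd_mul_le {N k : ℕ} (hN : 0 < N) {v : ℝ} (hk : (k : ℝ) / N ≤ v)
    (hk' : v ≤ ((k : ℝ) + 1) / N) :
    nnd (N * v) ≤ N * min (v - k / N) ((k + 1) / N - v) := by
  have hN' : (0 : ℝ) < N := by exact_mod_cast hN
  rw [mul_min_of_nonneg _ _ hN'.le, mul_sub, mul_sub, mul_div_cancel₀ _ hN'.ne',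
    mul_div_cancel₀ _ hN'.ne']
  exact nnd_le_min_sub ((div_le_iff₀' hN').1 hk) ((le_div_iff₀' hN').1 hk')

end NearestInteger

section AreaBetweenGraphs

variable {f : ℝ → ℝ}

lemma measurableSet_mem_Ico_min_max (hf : Measurable f) (c : ℝ) :
    MeasurableSet {p : ℝ × ℝ | p.2 ∈ Ico (min c (f p.1)) (max c (f p.1))} :=
  (measurableSet_le (measurable_const.min (hf.comp measurable_fst)) measurable_snd).inter
    (measurableSet_lt measurable_snd (measurable_const.max (hf.comp measurable_fst)))

lemma measurable_restrict_setOf_mem_Ico_min_max (hf : Measurable f) (c : ℝ) (s : Set ℝ) :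
    Measurable fun y => volume.restrict s {u | y ∈ Ico (min c (f u)) (max c (f u))} :=
  measurable_measure_prodMk_right (measurableSet_mem_Ico_min_max hf c)

/-- Tonelli's theorem for the region between the graph of `f` over `s` and the level `c`. -/
lemma setLIntegral_ofReal_abs_sub_eq (hf : Measurable f) (c : ℝ) (s : Set ℝ) :
    ∫⁻ u in s, ENNReal.ofReal |c - f u| =
      ∫⁻ y, volume.restrict s {u | y ∈ Ico (min c (f u)) (max c (f u))} := by
  have hE := measurableSet_mem_Ico_min_max hf c
  calc ∫⁻ u in s, ENNReal.ofReal |c - f u|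
      = ∫⁻ u in s, volume (Prod.mk u ⁻¹' {p : ℝ × ℝ | p.2 ∈ Ico (min c (f p.1)) (max c (f p.1))}) :=
        lintegral_congr fun u => by rw [← max_sub_min_eq_abs', ← Real.volume_Ico]; rfl
    _ = _ := by rw [← Measure.prod_apply hE, Measure.prod_apply_symm hE]; rfl

end AreaBetweenGraphs

section TransportCost

variable (μ : Measure ℝ)

/-- The quantile function crosses the level `y` at `u = F y`: `qf μ u ≤ y` for `u ≤ F y` and
`y < qf μ u` for `u > F y`. -/
lemma ofReal_min_sub_le_volume {a b y : ℝ} (ha : 0 ≤ a) (hb : b ≤ 1) (hay : a ≤ cdf μ y)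
    (hyb : cdf μ y ≤ b) (c : ℝ) :
    ENNReal.ofReal (min (cdf μ y - a) (b - cdf μ y)) ≤
      volume.restrict (Ioc a b) {u | y ∈ Ico (min c (qf μ u)) (max c (qf μ u))} := by
  refine le_trans ?_ (Measure.le_restrict_apply _ _)
  rcases le_or_gt c y with hcy | hyc
  · calc ENNReal.ofReal (min (cdf μ y - a) (b - cdf μ y))
        ≤ volume (Ioo (cdf μ y) b) := by
          rw [Real.volume_Ioo]; exact ENNReal.ofReal_le_ofReal (min_le_right _ _)
      _ ≤ _ := measure_mono fun u ⟨hyu, hub⟩ => by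
          have hu₀ : 0 < u := (ha.trans hay).trans_lt hyu
          have hyq : y < qf μ u := lt_of_not_ge fun h =>
            ((qf_le_iff_le_cdf μ hu₀ (hub.trans_le hb)).1 h).not_gt hyu
          exact ⟨⟨min_le_of_left_le hcy, lt_max_of_lt_right hyq⟩, hay.trans_lt hyu, hub.le⟩
  · calc ENNReal.ofReal (min (cdf μ y - a) (b - cdf μ y))
        ≤ volume (Ioc a (cdf μ y)) := by
          rw [Real.volume_Ioc]; exact ENNReal.ofReal_le_ofReal (min_le_left _ _)
      _ ≤ _ := measure_mono fun u ⟨hau, huy⟩ => by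
          have hqy : qf μ u ≤ y := qf_le_of_le_cdf μ (ha.trans_lt hau) huy
          exact ⟨⟨min_le_of_right_le hqy, lt_max_of_lt_left hyc⟩, hau, huy.trans hyb⟩

/-- The `L¹` cost of transporting `μ` onto the points `x i`, each of mass `1 / N`, along the
quantile coupling. -/
noncomputable def transportCost {N : ℕ} (x : Fin N → ℝ) : ℝ≥0∞ :=
  ∑ i : Fin N, ∫⁻ u in Ioc ((i : ℝ) / N) (((i : ℝ) + 1) / N), ENNReal.ofReal |x i - qf μ u|

lemma fin_add_one_div_le_one {N : ℕ} (i : Fin N) : ((i : ℝ) + 1) / N ≤ 1 :=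
  div_le_one_of_le₀ (by exact_mod_cast i.isLt) (Nat.cast_nonneg N)

lemma lintegral_nnd_mul_cdf_le {N : ℕ} (hN : 0 < N) (x : Fin N → ℝ) :
    ∫⁻ y, ENNReal.ofReal (nnd (N * cdf μ y)) ≤ N * transportCost μ x := by
  simp only [transportCost, setLIntegral_ofReal_abs_sub_eq (measurable_qf μ)]
  rw [← lintegral_finsetSum _ fun i _ =>
    measurable_restrict_setOf_mem_Ico_min_max (measurable_qf μ) (x i) _,
    ← lintegral_const_mul' _ _ (ENNReal.natCast_ne_top N)]
  refine lintegral_mono fun y => ?_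
  obtain ⟨k, hk, hk'⟩ := exists_fin_div_le_le hN (cdf_nonneg μ y) (cdf_le_one μ y)
  calc ENNReal.ofReal (nnd (N * cdf μ y))
      ≤ ENNReal.ofReal (N * min (cdf μ y - k / N) ((k + 1) / N - cdf μ y)) :=
        ENNReal.ofReal_le_ofReal (nnd_mul_le hN hk hk')
    _ = N * ENNReal.ofReal (min (cdf μ y - k / N) ((k + 1) / N - cdf μ y)) := by
        rw [ENNReal.ofReal_mul (Nat.cast_nonneg N), ENNReal.ofReal_natCast]
    _ ≤ N * ∑ i : Fin N, volume.restrict (Ioc ((i : ℝ) / N) (((i : ℝ) + 1) / N))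
          {u | y ∈ Ico (min (x i) (qf μ u)) (max (x i) (qf μ u))} := by
        gcongr
        refine (ofReal_min_sub_le_volume μ (by positivity) (fin_add_one_div_le_one k) hk hk'
          (x k)).trans ?_
        exact Finset.single_le_sum (fun i _ => zero_le (α := ℝ≥0∞)) (Finset.mem_univ k)

end TransportCost

section Integrability

variable (μ : Measure ℝ) [IsProbabilityMeasure μ] (hmom : Integrable (fun x : ℝ => |x|) μ)
include hmom

lemma setLIntegral_ofReal_abs_sub_qf_ne_top {N : ℕ} (i : Fin N) (c : ℝ) :
    ∫⁻ u in Ioc ((i : ℝ) / N) (((i : ℝ) + 1) / N), ENNReal.ofReal |c - qf μ u| ≠ ⊤ :=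
  have hint : IntegrableOn (fun u => |c - qf μ u|) (Ioc 0 1) :=
    ((integrable_const c).sub (integrableOn_qf μ hmom)).abs
  (hint.mono_set (Ioc_subset_Ioc (by positivity) (fin_add_one_div_le_one i))).lintegral_lt_top.ne

lemma transportCost_ne_top {N : ℕ} (x : Fin N → ℝ) : transportCost μ x ≠ ⊤ :=
  ENNReal.sum_ne_top.2 fun i _ => setLIntegral_ofReal_abs_sub_qf_ne_top μ hmom i (x i)

lemma eN_one_eq_sInf (N : ℕ) :
    eN μ 1 N = sInf ((fun x : Fin N → ℝ => (transportCost μ x).toReal) '' {x | Monotone x}) := by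
  refine congrArg sInf (image_congr fun x _ => ?_)
  rw [transportCost, ENNReal.toReal_sum fun i _ => setLIntegral_ofReal_abs_sub_qf_ne_top μ hmom i _,
    div_one, Real.rpow_one]
  refine Finset.sum_congr rfl fun i _ => ?_
  simp only [Real.rpow_one]
  exact integral_eq_lintegral_of_nonneg_ae (.of_forall fun _ => abs_nonneg _)
    (measurable_const.sub (measurable_qf μ)).abs.aestronglyMeasurable

end Integrability

section MainBound

variable (μ : Measure ℝ)

lemma lintegral_min_cdf_le {N : ℕ} (hN : 0 < N) (x : Fin N → ℝ) (x' : Fin (N + 1) → ℝ) :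
    ∫⁻ y, ENNReal.ofReal (min (cdf μ y) (1 - cdf μ y)) ≤
      N * transportCost μ x + (N + 1 : ℕ) * transportCost μ x' := by
  have hmeas : Measurable fun y => ENNReal.ofReal (nnd (N * cdf μ y)) :=
    (measurable_nnd.comp (measurable_const.mul (monotone_cdf μ).measurable)).ennreal_ofReal
  calc ∫⁻ y, ENNReal.ofReal (min (cdf μ y) (1 - cdf μ y))
      ≤ ∫⁻ y, ENNReal.ofReal (nnd (N * cdf μ y)) +
          ENNReal.ofReal (nnd ((N + 1 : ℕ) * cdf μ y)) :=
        lintegral_mono fun y =>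
          (ENNReal.ofReal_le_ofReal (min_le_nnd_add_nnd _ N)).trans ENNReal.ofReal_add_le
    _ = (∫⁻ y, ENNReal.ofReal (nnd (N * cdf μ y))) +
          ∫⁻ y, ENNReal.ofReal (nnd ((N + 1 : ℕ) * cdf μ y)) := lintegral_add_left hmeas _
    _ ≤ _ := add_le_add (lintegral_nnd_mul_cdf_le μ hN x)
          (lintegral_nnd_mul_cdf_le μ (by omega) x')

lemma integral_min_cdf_eq_toReal :
    ∫ y, min (cdf μ y) (1 - cdf μ y) =
      (∫⁻ y, ENNReal.ofReal (min (cdf μ y) (1 - cdf μ y))).toReal :=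
  integral_eq_lintegral_of_nonneg_ae
    (.of_forall fun y => le_min (cdf_nonneg μ y) (sub_nonneg.2 (cdf_le_one μ y)))
    ((monotone_cdf μ).measurable.min
      (measurable_const.sub (monotone_cdf μ).measurable)).aestronglyMeasurable

variable [IsProbabilityMeasure μ] (hmom : Integrable (fun x : ℝ => |x|) μ)
include hmom

lemma lintegral_min_cdf_ne_top : ∫⁻ y, ENNReal.ofReal (min (cdf μ y) (1 - cdf μ y)) ≠ ⊤ :=
  ne_top_of_le_ne_top (by simp [ENNReal.mul_eq_top, transportCost_ne_top μ hmom])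
    (lintegral_min_cdf_le μ one_pos (fun _ => 0) (fun _ => 0))

lemma integral_min_cdf_le {N : ℕ} (hN : 0 < N) (x : Fin N → ℝ) (x' : Fin (N + 1) → ℝ) :
    ∫ y, min (cdf μ y) (1 - cdf μ y) ≤
      N * (transportCost μ x).toReal + (N + 1) * (transportCost μ x').toReal := by
  rw [integral_min_cdf_eq_toReal μ]
  refine ENNReal.toReal_le_of_le_ofReal (by positivity) ?_
  convert lintegral_min_cdf_le μ hN x x'
  rw [ENNReal.ofReal_add (by positivity) (by positivity), ENNReal.ofReal_mul (by positivity),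
    ENNReal.ofReal_mul (by positivity), ENNReal.ofReal_toReal (transportCost_ne_top μ hmom x),
    ENNReal.ofReal_toReal (transportCost_ne_top μ hmom x'),
    ENNReal.ofReal_add (by positivity) zero_le_one]
  simp

end MainBound

section Positivity

variable (μ : Measure ℝ) [IsProbabilityMeasure μ]

lemma exists_cdf_pos_lt_one (hnd : ∀ a : ℝ, μ ≠ Measure.dirac a) :
    ∃ y, 0 < cdf μ y ∧ cdf μ y < 1 := by
  by_contra! h
  refine hnd (qf μ (1 / 2)) (Measure.eq_of_cdf _ _ ?_)
  ext y
  rw [cdf_eq_real (Measure.dirac _), measureReal_def, Measure.dirac_apply' _ measurableSet_Iic]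
  by_cases hy : qf μ (1 / 2) ≤ y
  · have hF := (qf_le_iff_le_cdf μ (by norm_num) (by norm_num)).1 hy
    rw [indicator_of_mem (mem_Iic.2 hy), Pi.one_apply, ENNReal.toReal_one]
    exact le_antisymm (cdf_le_one μ y) (h y (by linarith))
  · have hF : cdf μ y < 1 / 2 := lt_of_not_ge fun h' => hy (qf_le_of_le_cdf μ (by norm_num) h')
    rw [indicator_of_notMem (mt mem_Iic.1 hy), ENNReal.toReal_zero]
    exact le_antisymm (not_lt.1 fun h0 => by linarith [h y h0]) (cdf_nonneg μ y)

lemma lintegral_min_cdf_pos (hnd : ∀ a : ℝ, μ ≠ Measure.dirac a) :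
    0 < ∫⁻ y, ENNReal.ofReal (min (cdf μ y) (1 - cdf μ y)) := by
  obtain ⟨y₀, hy₀, hy₁⟩ := exists_cdf_pos_lt_one μ hnd
  have hright : ∀ᶠ z in 𝓝[>] y₀, cdf μ z < 1 :=
    ((cdf μ).right_continuous y₀).eventually (gt_mem_nhds hy₁) |>.filter_mono
      (nhdsWithin_mono _ Ioi_subset_Ici_self)
  obtain ⟨z, hz₁, hz⟩ := (hright.and self_mem_nhdsWithin).exists
  calc 0 < ENNReal.ofReal (min (cdf μ y₀) (1 - cdf μ z)) * volume (Ioo y₀ z) := by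
        refine ENNReal.mul_pos (ENNReal.ofReal_pos.2 (lt_min hy₀ (by linarith))).ne' ?_
        simpa using hz
    _ = ∫⁻ y, (Ioo y₀ z).indicator (fun _ => ENNReal.ofReal (min (cdf μ y₀) (1 - cdf μ z))) y :=
        (lintegral_indicator_const measurableSet_Ioo _).symm
    _ ≤ _ := lintegral_mono <| indicator_le fun y hy => ENNReal.ofReal_le_ofReal <|
        min_le_min (monotone_cdf μ hy.1.le) (by linarith [monotone_cdf μ hy.2.le])

lemma integral_min_cdf_pos (hmom : Integrable (fun x : ℝ => |x|) μ)
    (hnd : ∀ a : ℝ, μ ≠ Measure.dirac a) : 0 < ∫ y, min (cdf μ y) (1 - cdf μ y) := by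
  rw [integral_min_cdf_eq_toReal]
  exact ENNReal.toReal_pos (lintegral_min_cdf_pos μ hnd).ne' (lintegral_min_cdf_ne_top μ hmom)

end Positivity

lemma le_mul_sInf_add_mul_sInf {A B : Set ℝ} (hA : A.Nonempty) (hB : B.Nonempty) {p q c : ℝ}
    (hp : 0 ≤ p) (hq : 0 ≤ q) (h : ∀ a ∈ A, ∀ b ∈ B, c ≤ p * a + q * b) :
    c ≤ p * sInf A + q * sInf B := by
  have hpA : ∀ b ∈ B, c - q * b ≤ p * sInf A := fun b hb => by
    rw [← smul_eq_mul p, ← Real.sInf_smul_of_nonneg hp]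
    exact le_csInf hA.smul_set (by rintro _ ⟨a, ha, rfl⟩; linarith [h a ha b hb, smul_eq_mul p a])
  have hqB : c - p * sInf A ≤ q * sInf B := by
    rw [← smul_eq_mul q, ← Real.sInf_smul_of_nonneg hq]
    exact le_csInf hB.smul_set (by rintro _ ⟨b, hb, rfl⟩; linarith [hpA b hb, smul_eq_mul q b])
  linarith

lemma frequently_half_le_of_le_add_succ {a : ℕ → ℝ} {c : ℝ}
    (h : ∀ᶠ N in atTop, c ≤ a N + a (N + 1)) : ∃ᶠ N in atTop, c / 2 ≤ a N := fun hsmall => by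
  obtain ⟨N, hN, hN₀, hN₁⟩ :=
    (h.and (hsmall.and ((tendsto_add_atTop_nat 1).eventually hsmall))).exists
  linarith [not_le.1 hN₀, not_le.1 hN₁]

lemma integral_min_cdf_le_add_eN (μ : Measure ℝ) [IsProbabilityMeasure μ]
    (hmom : Integrable (fun x : ℝ => |x|) μ) {N : ℕ} (hN : 0 < N) :
    ∫ y, min (cdf μ y) (1 - cdf μ y) ≤ N * eN μ 1 N + (N + 1) * eN μ 1 (N + 1) := by
  rw [eN_one_eq_sInf μ hmom, eN_one_eq_sInf μ hmom]
  refine le_mul_sInf_add_mul_sInf (image_nonempty.2 ⟨0, monotone_const⟩)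
    (image_nonempty.2 ⟨0, monotone_const⟩) (by positivity) (by positivity) ?_
  rintro _ ⟨x, -, rfl⟩ _ ⟨x', -, rfl⟩
  exact integral_min_cdf_le μ hmom hN x x'

theorem stmt15 (μ : Measure ℝ) [IsProbabilityMeasure μ]
    (hmom : Integrable (fun x : ℝ => |x|) μ) (hnd : ∀ a : ℝ, μ ≠ Measure.dirac a) :
    (∀ N : ℕ, 1 ≤ N →
      (1 / 2) * ∫ x : ℝ, min (cdf μ x) (1 - cdf μ x) ≤
        (N : ℝ) * eN μ 1 N + ((N : ℝ) + 1) * eN μ 1 (N + 1)) ∧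
    (0 < ∫ x : ℝ, min (cdf μ x) (1 - cdf μ x)) ∧
    (∃ c : ℝ, 0 < c ∧ ∃ᶠ N : ℕ in Filter.atTop, c ≤ (N : ℝ) * eN μ 1 N) := by
  have hpos := integral_min_cdf_pos μ hmom hnd
  have hle : ∀ N : ℕ, 1 ≤ N → ∫ x, min (cdf μ x) (1 - cdf μ x) ≤
      (N : ℝ) * eN μ 1 N + ((N : ℝ) + 1) * eN μ 1 (N + 1) :=
    fun N hN => integral_min_cdf_le_add_eN μ hmom hN
  refine ⟨fun N hN => by linarith [hle N hN], hpos, _, half_pos hpos, ?_⟩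
  refine frequently_half_le_of_le_add_succ ((eventually_ge_atTop 1).mono fun N hN => ?_)
  simpa using hle N hN
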